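/- arXiv:1503.02091 — 7 statements merged into one kernel-verified Lean document; each statement's English description precedes it below -/
import Mathlib

section
/- Let k, m ≥ 2. The K-algebra homomorphism from K[t_1,…,t_m] ⊗_K T_km^{(0)} to T_km determined by t_i ↦ tr(y_i)·I (for i = 1,…,m) and by the inclusion of T_km^{(0)} into T_km is an isomorphism of K-algebras; likewise, the K-algebra homomorphism from K[t_1,…,t_m] ⊗_K C_km^{(0)} to C_km determined by t_i ↦ tr(y_i)·I and the inclusion of C_km^{(0)} is an isomorphism. -/
open scoped BigOperators
noncomputable section

/-- `Ω = K[y_pq^(i)]`, matrices over the polynomial ring in `k²m` variables. -/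
abbrev Mat (K : Type) [Field K] (k m : ℕ) :=
  Matrix (Fin k) (Fin k) (MvPolynomial (Fin m × Fin k × Fin k) K)

/-- The generic `k × k` matrices `y_i = (y_pq^(i))`. -/
def genY (K : Type) [Field K] (k m : ℕ) (i : Fin m) : Mat K k m :=
  Matrix.of fun p q => MvPolynomial.X (i, p, q)

/-- The scalar matrix `f · I` for `f ∈ Ω`. -/
def scalarOf (K : Type) [Field K] (k m : ℕ)
    (f : MvPolynomial (Fin m × Fin k × Fin k) K) : Mat K k m :=
  algebraMap _ _ f

/-- `R_km`: the generic matrix algebra, generated by `y_1, …, y_m`. -/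
def Rkm (K : Type) [Field K] (k m : ℕ) : Subalgebra K (Mat K k m) :=
  Algebra.adjoin K (Set.range (genY K k m))

/-- `C_km`: the pure trace algebra, generated by the `tr(y_{i_1} ⋯ y_{i_l}) · I`, `l ≥ 1`. -/
def Ckm (K : Type) [Field K] (k m : ℕ) : Subalgebra K (Mat K k m) :=
  Algebra.adjoin K
    {x | ∃ (l : ℕ) (w : Fin (l + 1) → Fin m),
      x = scalarOf K k m (Matrix.trace ((List.ofFn fun j => genY K k m (w j)).prod))}

/-- `T_km`: the mixed trace algebra, generated by `R_km ∪ C_km`. -/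
def Tkm (K : Type) [Field K] (k m : ℕ) : Subalgebra K (Mat K k m) :=
  Rkm K k m ⊔ Ckm K k m

/-- The generic traceless matrices `z_i = y_i - (1/k)·tr(y_i)·I`. -/
def genZ (K : Type) [Field K] (k m : ℕ) (i : Fin m) : Mat K k m :=
  genY K k m i - (k : K)⁻¹ • scalarOf K k m (Matrix.trace (genY K k m i))

/-- `W_km`: the algebra generated by the generic traceless matrices `z_1, …, z_m`. -/
def Wkm (K : Type) [Field K] (k m : ℕ) : Subalgebra K (Mat K k m) :=
  Algebra.adjoin K (Set.range (genZ K k m))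

/-- `C_km⁰`: the algebra generated by the `tr(z_{i_1} ⋯ z_{i_l}) · I`, `l ≥ 1`. -/
def Ckm0 (K : Type) [Field K] (k m : ℕ) : Subalgebra K (Mat K k m) :=
  Algebra.adjoin K
    {x | ∃ (l : ℕ) (w : Fin (l + 1) → Fin m),
      x = scalarOf K k m (Matrix.trace ((List.ofFn fun j => genZ K k m (w j)).prod))}

/-- `T_km⁰`: the algebra generated by `W_km ∪ C_km⁰`. -/
def Tkm0 (K : Type) [Field K] (k m : ℕ) : Subalgebra K (Mat K k m) :=
  Wkm K k m ⊔ Ckm0 K k m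

/-- The subspace of matrices all of whose entries have total degree at most `n`,
i.e. `M_k(Ω_{≤n})`. -/
def degLE (K : Type) [Field K] (k m n : ℕ) : Submodule K (Mat K k m) where
  carrier := {a | ∀ p q, (a p q).totalDegree ≤ n}
  add_mem' := by
    intro a b ha hb p q
    calc ((a + b) p q).totalDegree = (a p q + b p q).totalDegree := by simp [Matrix.add_apply]
    _ ≤ max (a p q).totalDegree (b p q).totalDegree := MvPolynomial.totalDegree_add _ _
    _ ≤ n := max_le (ha p q) (hb p q)
  zero_mem' := by intro p q; simp
  smul_mem' := by
    intro c a ha p q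
    calc ((c • a) p q).totalDegree = (c • a p q).totalDegree := by simp [Matrix.smul_apply]
    _ ≤ (a p q).totalDegree := MvPolynomial.totalDegree_smul_le _ _
    _ ≤ n := ha p q

open scoped TensorProduct

/-- The `K`-algebra map `K[t_1, …, t_m] → M_k(Ω)` sending `t_i ↦ tr(y_i)·I`. -/
def trY (K : Type) [Field K] (k m : ℕ) : MvPolynomial (Fin m) K →ₐ[K] Mat K k m :=
  (IsScalarTower.toAlgHom K (MvPolynomial (Fin m × Fin k × Fin k) K) (Mat K k m)).comp
    (MvPolynomial.aeval fun i => Matrix.trace (genY K k m i))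

lemma trY_commute (K : Type) [Field K] (k m : ℕ) (p : MvPolynomial (Fin m) K)
    (x : Mat K k m) : Commute (trY K k m p) x :=
  Algebra.commutes (MvPolynomial.aeval (fun i => Matrix.trace (genY K k m i)) p) x

/-- The map `K[t_1, …, t_m] ⊗_K T_km⁰ → M_k(Ω)` determined by `t_i ↦ tr(y_i)·I` and the
inclusion of `T_km⁰`. -/
def tensorT (K : Type) [Field K] (k m : ℕ) :
    MvPolynomial (Fin m) K ⊗[K] ↥(Tkm0 K k m) →ₐ[K] Mat K k m :=
  Algebra.TensorProduct.lift (trY K k m) (Tkm0 K k m).val fun p c => trY_commute K k m p c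

/-- The map `K[t_1, …, t_m] ⊗_K C_km⁰ → M_k(Ω)` determined by `t_i ↦ tr(y_i)·I` and the
inclusion of `C_km⁰`. -/
def tensorC (K : Type) [Field K] (k m : ℕ) :
    MvPolynomial (Fin m) K ⊗[K] ↥(Ckm0 K k m) →ₐ[K] Mat K k m :=
  Algebra.TensorProduct.lift (trY K k m) (Ckm0 K k m).val fun p c => trY_commute K k m p c

/-!
Since `y_i = z_i + (1/k) tr(y_i) · I`, traces of words in the `y_i` are polynomials in the
`tr(y_i)` and the traces of words in the `z_i`, and conversely; this gives the two ranges.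

For injectivity, substitute `y_i ↦ y_i + (t_i - tr(y_i))/k · I` with new variables `t_i`. This
fixes every `z_i`, hence every element of `T_km⁰`, and sends `tr(y_i)` to `t_i`. So the image of
`∑ p_d ⊗ c_d` becomes `∑ p_d(t) c_d`, whose `t`-coefficients recover the `c_d`.
-/

theorem Algebra.TensorProduct.range_lift {R A B C : Type*} [CommSemiring R] [Semiring A]
    [Algebra R A] [Semiring B] [Algebra R B] [Semiring C] [Algebra R C]
    (f : A →ₐ[R] C) (g : B →ₐ[R] C) (hfg : ∀ x y, Commute (f x) (g y)) :
    (lift f g hfg).range = f.range ⊔ g.range := by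
  refine le_antisymm ?_ (sup_le ?_ ?_)
  · rintro _ ⟨x, rfl⟩
    induction x using TensorProduct.induction_on with
    | zero => simp
    | tmul a b =>
      exact mul_mem (le_sup_left (a := f.range) ⟨a, rfl⟩)
        (le_sup_right (b := g.range) ⟨b, rfl⟩)
    | add x y hx hy => rw [map_add]; exact add_mem hx hy
  · rintro _ ⟨a, rfl⟩
    exact ⟨a ⊗ₜ 1, by simp⟩
  · rintro _ ⟨b, rfl⟩
    exact ⟨1 ⊗ₜ b, by simp⟩

theorem Matrix.trace_prod_map_add_algebraMap_mem {K R n ι : Type*} [CommSemiring K]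
    [CommSemiring R] [Algebra K R] [Fintype n] [DecidableEq n] (B : Subalgebra K R)
    (g : ι → Matrix n n R) (c : ι → R) (hc : ∀ i, c i ∈ B)
    (hg : ∀ L : List ι, trace (L.map g).prod ∈ B) (L : List ι) :
    trace (L.map fun i => g i + algebraMap R _ (c i)).prod ∈ B := by
  suffices ∀ L' : List ι,
      trace ((L'.map g).prod * (L.map fun i => g i + algebraMap R _ (c i)).prod) ∈ B by
    simpa using this []
  induction L with
  | nil => simpa using hg
  | cons i L ih =>
    intro L'
    have split : (L'.map g).prod * (g i + algebraMap R _ (c i)) =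
        ((L' ++ [i]).map g).prod + c i • (L'.map g).prod := by
      simp [mul_add, Algebra.smul_def, Algebra.commutes]
    rw [List.map_cons, List.prod_cons, ← mul_assoc, split, add_mul, trace_add, smul_mul_assoc,
      trace_smul, smul_eq_mul]
    exact add_mem (ih _) (mul_mem (hc i) (ih L'))

open TensorProduct in
theorem MvPolynomial.injective_of_coeff_tmul {R σ N M P : Type*} [CommSemiring R]
    [AddCommMonoid N] [Module R N] [AddCommMonoid M] [Module R M] [AddCommMonoid P]
    [Module R P] (f : MvPolynomial σ R ⊗[R] N →ₗ[R] M) (c : (σ →₀ ℕ) → M →ₗ[R] P)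
    (ι : N →ₗ[R] P) (hι : Function.Injective ι)
    (h : ∀ d p n, c d (f (p ⊗ₜ n)) = coeff d p • ι n) :
    Function.Injective f := by
  classical
  let e : MvPolynomial σ R ⊗[R] N ≃ₗ[R] (σ →₀ ℕ) →₀ N :=
    (LinearEquiv.rTensor N (AddMonoidAlgebra.coeffLinearEquiv R)).trans
      (finsuppScalarLeft R N _)
  have he : ∀ d, c d ∘ₗ f = ι ∘ₗ Finsupp.lapply d ∘ₗ e.toLinearMap := fun d =>
    TensorProduct.ext' fun p n => by
      simp only [LinearMap.coe_comp, Function.comp_apply, h, LinearEquiv.coe_coe,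
        LinearEquiv.trans_apply, LinearEquiv.rTensor_tmul, AddMonoidAlgebra.coeffLinearEquiv_apply,
        Finsupp.lapply_apply, finsuppScalarLeft_apply_tmul_apply, map_smul, e]
      rfl
  intro x y hxy
  refine e.injective (Finsupp.ext fun d => hι ?_)
  simpa using congr($(he d) x).symm.trans (congr(c d $hxy).trans congr($(he d) y))

theorem AlgHom.mapMatrix_algebraMap {R A B n : Type*} [CommSemiring R] [CommSemiring A]
    [CommSemiring B] [Algebra R A] [Algebra R B] [Fintype n] [DecidableEq n] (φ : A →ₐ[R] B)
    (a : A) :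
    φ.mapMatrix (algebraMap A (Matrix n n A) a) = algebraMap B (Matrix n n B) (φ a) := by
  ext i j
  simp [Matrix.algebraMap_matrix_apply, apply_ite φ]

namespace GenericMatrix

open MvPolynomial Matrix

variable (K : Type) [Field K] (k m : ℕ)

local notation "Ω" => MvPolynomial (Fin m × Fin k × Fin k) K
local notation "Ωt" => MvPolynomial (Fin m) Ω

def pureTraceAlg (g : Fin m → Mat K k m) : Subalgebra K (Mat K k m) :=
  Algebra.adjoin K
    {x | ∃ (l : ℕ) (w : Fin (l + 1) → Fin m),
      x = scalarOf K k m (trace ((List.ofFn fun j => g (w j)).prod))}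

lemma scalarOf_smul (a : K) (f : Ω) : scalarOf K k m (a • f) = a • scalarOf K k m f :=
  map_smul (IsScalarTower.toAlgHom K Ω (Mat K k m)) a f

variable {K k m} in
lemma pureTraceAlg_le {A : Subalgebra K (Mat K k m)} {g b : Fin m → Mat K k m} (c : Fin m → Ω)
    (hb : ∀ i, b i = g i + scalarOf K k m (c i)) (hc : ∀ i, scalarOf K k m (c i) ∈ A)
    (hg : pureTraceAlg K k m g ≤ A) : pureTraceAlg K k m b ≤ A := by
  let B := A.comap (IsScalarTower.toAlgHom K Ω (Mat K k m))
  have hgB : ∀ L : List (Fin m), trace (L.map g).prod ∈ B := by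
    rintro (_ | ⟨i, L⟩)
    · simp [B]
    · refine hg (Algebra.subset_adjoin ⟨L.length, fun j => (i :: L)[(j : ℕ)], ?_⟩)
      exact congr_arg (fun L => scalarOf K k m (trace L.prod)) (List.ofFn_getElem_eq_map _ g).symm
  refine Algebra.adjoin_le ?_
  rintro _ ⟨l, w, rfl⟩
  rw [← Function.comp_def, ← List.map_ofFn, funext hb]
  exact trace_prod_map_add_algebraMap_mem B g c hc hgB _

lemma genY_eq_genZ_add (i : Fin m) :
    genY K k m i = genZ K k m i + scalarOf K k m ((k : K)⁻¹ • trace (genY K k m i)) := by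
  rw [genZ, scalarOf_smul, sub_add_cancel]

lemma genZ_eq_genY_add (i : Fin m) :
    genZ K k m i = genY K k m i + scalarOf K k m (-(k : K)⁻¹ • trace (genY K k m i)) := by
  rw [genZ, scalarOf_smul, neg_smul, sub_eq_add_neg]

lemma scalarOf_trace_genY_mem_Ckm (i : Fin m) :
    scalarOf K k m (trace (genY K k m i)) ∈ Ckm K k m :=
  Algebra.subset_adjoin ⟨0, fun _ => i, by simp⟩

lemma Ckm0_le_Ckm : Ckm0 K k m ≤ Ckm K k m :=
  pureTraceAlg_le _ (genZ_eq_genY_add K k m)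
    (fun i => by
      rw [scalarOf_smul]
      exact Subalgebra.smul_mem _ (scalarOf_trace_genY_mem_Ckm K k m i) _)
    le_rfl

variable {K k m} in
lemma Ckm_le {A : Subalgebra K (Mat K k m)}
    (htr : ∀ i, scalarOf K k m (trace (genY K k m i)) ∈ A) (h0 : Ckm0 K k m ≤ A) :
    Ckm K k m ≤ A :=
  pureTraceAlg_le _ (genY_eq_genZ_add K k m)
    (fun i => by rw [scalarOf_smul]; exact Subalgebra.smul_mem _ (htr i) _) h0

lemma range_trY : (trY K k m).range =
    Algebra.adjoin K (Set.range fun i => scalarOf K k m (trace (genY K k m i))) := by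
  rw [trY, AlgHom.range_comp, aeval_range, AlgHom.map_adjoin, ← Set.range_comp]
  rfl

lemma range_trY_le_Ckm : (trY K k m).range ≤ Ckm K k m := by
  rw [range_trY]
  exact Algebra.adjoin_le (Set.range_subset_iff.2 (scalarOf_trace_genY_mem_Ckm K k m))

lemma scalarOf_trace_genY_mem_range_trY (i : Fin m) :
    scalarOf K k m (trace (genY K k m i)) ∈ (trY K k m).range :=
  range_trY K k m ▸ Algebra.subset_adjoin ⟨i, rfl⟩

lemma Ckm_eq_range_trY_sup : Ckm K k m = (trY K k m).range ⊔ Ckm0 K k m :=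
  le_antisymm
    (Ckm_le (fun i => le_sup_left (a := (trY K k m).range)
      (scalarOf_trace_genY_mem_range_trY K k m i)) le_sup_right)
    (sup_le (range_trY_le_Ckm K k m) (Ckm0_le_Ckm K k m))

lemma Tkm0_le_Tkm : Tkm0 K k m ≤ Tkm K k m := by
  refine sup_le (Algebra.adjoin_le ?_) ((Ckm0_le_Ckm K k m).trans le_sup_right)
  rintro _ ⟨i, rfl⟩
  exact sub_mem (le_sup_left (a := Rkm K k m) (Algebra.subset_adjoin ⟨i, rfl⟩))
    (Subalgebra.smul_mem _
      (le_sup_right (a := Rkm K k m) (scalarOf_trace_genY_mem_Ckm K k m i)) _)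

lemma Tkm_eq_range_trY_sup : Tkm K k m = (trY K k m).range ⊔ Tkm0 K k m := by
  have htr : ∀ i, scalarOf K k m (trace (genY K k m i)) ∈ (trY K k m).range ⊔ Tkm0 K k m :=
    fun i => le_sup_left (a := (trY K k m).range) (scalarOf_trace_genY_mem_range_trY K k m i)
  have hW : Wkm K k m ≤ (trY K k m).range ⊔ Tkm0 K k m :=
    (le_sup_left (a := Wkm K k m)).trans le_sup_right
  refine le_antisymm (sup_le (Algebra.adjoin_le ?_) (Ckm_le htr ?_)) ?_
  · rintro _ ⟨i, rfl⟩
    rw [genY_eq_genZ_add, scalarOf_smul]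
    exact add_mem (hW (Algebra.subset_adjoin ⟨i, rfl⟩)) (Subalgebra.smul_mem _ (htr i) _)
  · exact (le_sup_right (a := Wkm K k m)).trans le_sup_right
  · exact sup_le ((range_trY_le_Ckm K k m).trans le_sup_right) (Tkm0_le_Tkm K k m)

lemma range_tensorT : (tensorT K k m).range = Tkm K k m :=
  (Algebra.TensorProduct.range_lift _ _ _).trans <| by
    rw [Subalgebra.range_val, Tkm_eq_range_trY_sup]

lemma range_tensorC : (tensorC K k m).range = Ckm K k m :=
  (Algebra.TensorProduct.range_lift _ _ _).trans <| by
    rw [Subalgebra.range_val, Ckm_eq_range_trY_sup]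

def traceShift : Ω →ₐ[K] Ωt :=
  aeval fun v => C (X v) +
    if v.2.1 = v.2.2 then (k : K)⁻¹ • (X v.1 - C (trace (genY K k m v.1))) else 0

def traceShiftMat : Mat K k m →ₐ[K] Matrix (Fin k) (Fin k) Ωt :=
  (traceShift K k m).mapMatrix

def constMat : Mat K k m →ₐ[K] Matrix (Fin k) (Fin k) Ωt :=
  (IsScalarTower.toAlgHom K Ω Ωt).mapMatrix

variable {K k m}

lemma traceShift_trace_genY (hk0 : (k : K) ≠ 0) (i : Fin m) :
    traceShift K k m (trace (genY K k m i)) = X i := by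
  have hdiag : ∀ p : Fin k, traceShift K k m (X (i, p, p)) =
      C (X (i, p, p)) + (k : K)⁻¹ • (X i - C (trace (genY K k m i))) := by
    simp [traceShift]
  have htr : trace (genY K k m i) = ∑ p : Fin k, X (i, p, p) := by
    simp [trace, genY]
  rw [htr, map_sum]
  simp only [hdiag, Finset.sum_add_distrib, Finset.sum_const, Finset.card_univ, Fintype.card_fin,
    ← Nat.cast_smul_eq_nsmul K, smul_smul, mul_inv_cancel₀ hk0, one_smul, ← map_sum, ← htr]
  ring

lemma traceShiftMat_genY (i : Fin m) :
    traceShiftMat K k m (genY K k m i) = constMat K k m (genY K k m i) +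
      algebraMap Ωt _ ((k : K)⁻¹ • (X i - C (trace (genY K k m i)))) := by
  ext p q
  by_cases hpq : p = q
  · subst hpq
    simp [traceShiftMat, constMat, traceShift, genY, Matrix.algebraMap_matrix_apply]
  · simp [traceShiftMat, constMat, traceShift, genY, Matrix.algebraMap_matrix_apply, hpq]

lemma traceShiftMat_scalarOf (f : Ω) :
    traceShiftMat K k m (scalarOf K k m f) = algebraMap Ωt _ (traceShift K k m f) :=
  AlgHom.mapMatrix_algebraMap _ _

lemma constMat_scalarOf (f : Ω) : constMat K k m (scalarOf K k m f) = algebraMap Ωt _ (C f) :=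
  AlgHom.mapMatrix_algebraMap _ _

lemma traceShiftMat_genZ (hk0 : (k : K) ≠ 0) (i : Fin m) :
    traceShiftMat K k m (genZ K k m i) = constMat K k m (genZ K k m i) := by
  rw [genZ, map_sub, map_sub, map_smul, map_smul, traceShiftMat_genY, traceShiftMat_scalarOf,
    constMat_scalarOf, traceShift_trace_genY hk0, ← IsScalarTower.toAlgHom_apply K, map_smul,
    map_sub, IsScalarTower.toAlgHom_apply, IsScalarTower.toAlgHom_apply, smul_sub]
  abel

lemma Tkm0_le_equalizer (hk0 : (k : K) ≠ 0) :
    Tkm0 K k m ≤ AlgHom.equalizer (traceShiftMat K k m) (constMat K k m) := by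
  have hW : Wkm K k m ≤ AlgHom.equalizer (traceShiftMat K k m) (constMat K k m) :=
    Algebra.adjoin_le (Set.range_subset_iff.2 (traceShiftMat_genZ hk0))
  refine sup_le hW (Algebra.adjoin_le ?_)
  rintro _ ⟨l, w, rfl⟩
  set M := (List.ofFn fun j => genZ K k m (w j)).prod
  have hM : traceShiftMat K k m M = constMat K k m M :=
    hW (list_prod_mem (List.forall_mem_ofFn_iff.2 fun j => Algebra.subset_adjoin ⟨w j, rfl⟩))
  rw [SetLike.mem_coe, AlgHom.mem_equalizer, traceShiftMat_scalarOf, constMat_scalarOf]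
  congr 1
  calc traceShift K k m (trace M) = trace (traceShiftMat K k m M) := AddMonoidHom.map_trace _ _
    _ = trace (constMat K k m M) := by rw [hM]
    _ = C (trace M) := (AddMonoidHom.map_trace _ _).symm

lemma traceShiftMat_trY (hk0 : (k : K) ≠ 0) (p : MvPolynomial (Fin m) K) :
    traceShiftMat K k m (trY K k m p) =
      algebraMap Ωt _ (MvPolynomial.map (algebraMap K Ω) p) := by
  have h : (traceShift K k m).comp (aeval fun i => trace (genY K k m i)) =
      mapAlgHom (Algebra.ofId K Ω) :=
    algHom_ext fun i => by simp [traceShift_trace_genY hk0]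
  exact (traceShiftMat_scalarOf _).trans (congrArg _ (DFunLike.congr_fun h p))

lemma injective_lift_of_le_Tkm0 (hk0 : (k : K) ≠ 0) (S : Subalgebra K (Mat K k m))
    (hS : S ≤ Tkm0 K k m) (hc : ∀ p (c : S), Commute (trY K k m p) (S.val c)) :
    Function.Injective (Algebra.TensorProduct.lift (trY K k m) S.val hc) := by
  let F := Algebra.TensorProduct.lift (trY K k m) S.val hc
  refine Function.Injective.of_comp (f := traceShiftMat K k m) <|
    MvPolynomial.injective_of_coeff_tmul ((traceShiftMat K k m).toLinearMap ∘ₗ F.toLinearMap)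
      (fun d => ((lcoeff Ω d).restrictScalars K).mapMatrix) S.val.toLinearMap
      Subtype.val_injective ?_
  intro d p c
  have hc0 : traceShiftMat K k m c = constMat K k m c := Tkm0_le_equalizer hk0 (hS c.2)
  ext a b : 1
  simp only [LinearMap.coe_comp, AlgHom.coe_toLinearMap, Function.comp_apply, F,
    Algebra.TensorProduct.lift_tmul, Subalgebra.coe_val, map_mul, traceShiftMat_trY hk0,
    algebraMap_eq, hc0, constMat, AlgHom.mapMatrix_apply, IsScalarTower.coe_toAlgHom',
    ← Algebra.smul_def, LinearMap.mapMatrix_apply, LinearMap.coe_restrictScalars, map_apply,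
    Matrix.smul_apply, smul_eq_mul, lcoeff_apply, AlgHom.toLinearMap_apply]
  rw [mul_comm, coeff_C_mul, coeff_map, mul_comm, C_mul']

end GenericMatrix

theorem stmt5_general (K : Type) [Field K] [CharZero K] (k m : ℕ) (hk : 2 ≤ k) :
    (Function.Injective (tensorT K k m) ∧ (tensorT K k m).range = Tkm K k m) ∧
    (Function.Injective (tensorC K k m) ∧ (tensorC K k m).range = Ckm K k m) := by
  have hk0 : (k : K) ≠ 0 := Nat.cast_ne_zero.mpr (by omega)
  exact ⟨⟨GenericMatrix.injective_lift_of_le_Tkm0 hk0 _ le_rfl _,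
      GenericMatrix.range_tensorT K k m⟩,
    GenericMatrix.injective_lift_of_le_Tkm0 hk0 _ le_sup_right _,
      GenericMatrix.range_tensorC K k m⟩

/-- **Procesi.** For `k, m ≥ 2`, the natural maps
`K[tr(y_1), …, tr(y_m)] ⊗_K T_km⁰ → T_km` and `K[tr(y_1), …, tr(y_m)] ⊗_K C_km⁰ → C_km`
are isomorphisms of `K`-algebras, i.e. the induced maps into `M_k(Ω)` are injective with
range `T_km`, resp. `C_km`. -/
theorem stmt5 (K : Type) [Field K] [CharZero K] (k m : ℕ) (hk : 2 ≤ k) (hm : 2 ≤ m) :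
    (Function.Injective (tensorT K k m) ∧ (tensorT K k m).range = Tkm K k m) ∧
    (Function.Injective (tensorC K k m) ∧ (tensorC K k m).range = Ckm K k m) :=
  stmt5_general K k m hk
end
end

section
/- Let k = 2 and m ≥ 2. The pure trace algebra C_2m is generated as a unital K-algebra by the scalar matrices tr(y_i)·I for i = 1,…,m, tr(y_i y_j)·I for 1 ≤ i ≤ j ≤ m, and tr(y_{i_1} y_{i_2} y_{i_3})·I for 1 ≤ i_1 < i_2 < i_3 ≤ m. -/
open scoped BigOperators
noncomputable section

/-!
Polarizing the Cayley–Hamilton theorem for `2 × 2` matrices gives two trace identities: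
`tr(abc) + tr(bac)` is a polynomial in traces of words of length at most two, and
`2 tr(abcp)` is a polynomial in traces of words strictly shorter than `abcp`. Since `2` is
invertible, induction on the length reduces the trace of every word in the `y_i` to traces of
words of length at most three. Up to cyclic rotation and the first identity, a word `y_i y_j y_k`
can be sorted, and if two letters coincide its trace is half of a sum of the first kind. What
remains are the `tr(y_i y_j y_k)` with `i < j < k`.
-/

namespace Matrix

variable {R : Type*} [CommRing R]

theorem trace_mul_mul_add_trace_mul_mul_fin_two (a b c : Matrix (Fin 2) (Fin 2) R) :
    trace (a * b * c) + trace (b * a * c) =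
      trace a * trace (b * c) + trace b * trace (a * c)
        + (trace (a * b) - trace a * trace b) * trace c := by
  simp only [trace_fin_two, mul_apply, Fin.sum_univ_two]
  ring

/-- The fully polarized Cayley–Hamilton identity for `a, b, c`, multiplied by `p` and traced. -/
theorem two_mul_trace_mul_mul_mul_fin_two (a b c p : Matrix (Fin 2) (Fin 2) R) :
    2 * trace (a * (b * (c * p))) =
      trace a * trace (b * (c * p)) + trace b * trace (a * (c * p))
        - trace c * trace (a * (p * b)) + trace p * trace (a * (b * c))
        + (trace (a * b) - trace a * trace b) * trace (c * p)
        - (trace (a * c) - trace a * trace c) * trace (b * p)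
        + (trace (a * p) - trace a * trace p) * trace (b * c) := by
  simp only [trace_fin_two, mul_apply, Fin.sum_univ_two]
  ring

end Matrix

theorem Subalgebra.mem_of_two_mul_mem {K R : Type*} [CommRing K] [Invertible (2 : K)] [Ring R]
    [Algebra K R] (S : Subalgebra K R) {x : R} (hx : 2 * x ∈ S) : x ∈ S := by
  have half : (⅟2 : K) • (2 * x) = x := by
    rw [Algebra.smul_def, ← mul_assoc, ← map_ofNat (algebraMap K R) 2, ← map_mul, invOf_mul_self,
      map_one, one_mul]
  exact half ▸ S.smul_mem hx (⅟2 : K)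

namespace TwoByTwoTraces

open Matrix

variable {K R ι : Type*} [CommRing K] [CommRing R] [Algebra K R]
  (a : ι → Matrix (Fin 2) (Fin 2) R)

def traceWord (u : List ι) : R :=
  trace (u.map a).prod

theorem traceWord_append_comm (u v : List ι) :
    traceWord a (u ++ v) = traceWord a (v ++ u) := by
  simp only [traceWord, List.map_append, List.prod_append]
  exact trace_mul_comm _ _

theorem traceWord_cons_cons_add_traceWord_cons_cons (i j k : ι) :
    traceWord a [i, j, k] + traceWord a [j, i, k] =
      traceWord a [i] * traceWord a [j, k] + traceWord a [j] * traceWord a [i, k]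
        + (traceWord a [i, j] - traceWord a [i] * traceWord a [j]) * traceWord a [k] := by
  simpa [traceWord, mul_assoc] using trace_mul_mul_add_trace_mul_mul_fin_two (a i) (a j) (a k)

theorem two_mul_traceWord_cons_cons_cons (i j k : ι) (p : List ι) :
    2 * traceWord a (i :: j :: k :: p) =
      traceWord a [i] * traceWord a (j :: k :: p) + traceWord a [j] * traceWord a (i :: k :: p)
        - traceWord a [k] * traceWord a (i :: (p ++ [j])) + traceWord a p * traceWord a [i, j, k]
        + (traceWord a [i, j] - traceWord a [i] * traceWord a [j]) * traceWord a (k :: p)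
        - (traceWord a [i, k] - traceWord a [i] * traceWord a [k]) * traceWord a (j :: p)
        + (traceWord a (i :: p) - traceWord a [i] * traceWord a p) * traceWord a [j, k] := by
  simpa [traceWord] using two_mul_trace_mul_mul_mul_fin_two (a i) (a j) (a k) (p.map a).prod

variable [LinearOrder ι]

def traceGenerators : Set R :=
  {x | ∃ i, x = trace (a i)} ∪ {x | ∃ i j, i ≤ j ∧ x = trace (a i * a j)} ∪
    {x | ∃ i j k, i < j ∧ j < k ∧ x = trace (a i * a j * a k)}

local notation "S" => Algebra.adjoin K (traceGenerators a)

theorem traceWord_singleton_mem (i : ι) : traceWord a [i] ∈ S :=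
  Algebra.subset_adjoin (Or.inl (Or.inl ⟨i, by simp [traceWord]⟩))

theorem traceWord_pair_mem (i j : ι) : traceWord a [i, j] ∈ S := by
  rcases le_total i j with hij | hji
  · exact Algebra.subset_adjoin (Or.inl (Or.inr ⟨i, j, hij, by simp [traceWord]⟩))
  · refine Algebra.subset_adjoin (Or.inl (Or.inr ⟨j, i, hji, ?_⟩))
    simpa [traceWord] using trace_mul_comm (a i) (a j)

theorem traceWord_triple_add_swap_mem (i j k : ι) :
    traceWord a [i, j, k] + traceWord a [j, i, k] ∈ S := by
  have h1 := traceWord_singleton_mem (K := K) a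
  have h2 := traceWord_pair_mem (K := K) a
  rw [traceWord_cons_cons_add_traceWord_cons_cons]
  exact add_mem (add_mem (mul_mem (h1 i) (h2 j k)) (mul_mem (h1 j) (h2 i k)))
    (mul_mem (sub_mem (h2 i j) (mul_mem (h1 i) (h1 j))) (h1 k))

theorem traceWord_triple_mem_of_swap {i j k : ι} (h : traceWord a [j, i, k] ∈ S) :
    traceWord a [i, j, k] ∈ S := by
  simpa using sub_mem (traceWord_triple_add_swap_mem a i j k) h

theorem traceWord_triple_mem_of_rotate {i j k : ι} (h : traceWord a [j, k, i] ∈ S) :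
    traceWord a [i, j, k] ∈ S :=
  traceWord_append_comm a [i] [j, k] ▸ h

variable [Invertible (2 : K)]

theorem traceWord_triple_mem_of_le {i j k : ι} (hij : i ≤ j) (hjk : j ≤ k) :
    traceWord a [i, j, k] ∈ S := by
  rcases hij.eq_or_lt with rfl | hij
  · exact Subalgebra.mem_of_two_mul_mem _
      (by simpa [two_mul] using traceWord_triple_add_swap_mem a i i k)
  rcases hjk.eq_or_lt with rfl | hjk
  · exact traceWord_triple_mem_of_rotate a
      (Subalgebra.mem_of_two_mul_mem _
        (by simpa [two_mul] using traceWord_triple_add_swap_mem a j j i))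
  · exact Algebra.subset_adjoin (Or.inr ⟨i, j, k, hij, hjk, by simp [traceWord, mul_assoc]⟩)

theorem traceWord_triple_mem (i j k : ι) : traceWord a [i, j, k] ∈ S := by
  have hswap {i j k : ι} (h : traceWord a [j, i, k] ∈ S) : traceWord a [i, j, k] ∈ S :=
    traceWord_triple_mem_of_swap a h
  have hrot {i j k : ι} (h : traceWord a [j, k, i] ∈ S) : traceWord a [i, j, k] ∈ S :=
    traceWord_triple_mem_of_rotate a h
  have hle {i j k : ι} (hij : i ≤ j) (hjk : j ≤ k) : traceWord a [i, j, k] ∈ S :=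
    traceWord_triple_mem_of_le a hij hjk
  rcases le_total i j with hij | hji <;> rcases le_total j k with hjk | hkj <;>
    rcases le_total i k with hik | hki
  all_goals first
    | exact hle ‹_› ‹_›
    | exact hswap (hle ‹_› ‹_›)
    | exact hrot (hle ‹_› ‹_›)
    | exact hrot (hrot (hle ‹_› ‹_›))
    | exact hswap (hrot (hle ‹_› ‹_›))
    | exact hrot (hswap (hle ‹_› ‹_›))

theorem traceWord_cons_cons_cons_mem {i j k : ι} {p : List ι} (hp : p ≠ [])
    (ih : ∀ v : List ι, v ≠ [] → v.length < p.length + 3 → traceWord a v ∈ S) :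
    traceWord a (i :: j :: k :: p) ∈ S := by
  have h1 := traceWord_singleton_mem (K := K) a
  have h2 := traceWord_pair_mem (K := K) a
  have hp_mem : traceWord a p ∈ S := ih p hp (by omega)
  refine Subalgebra.mem_of_two_mul_mem _ ?_
  rw [two_mul_traceWord_cons_cons_cons]
  refine add_mem (sub_mem (add_mem (add_mem (sub_mem (add_mem ?_ ?_) ?_) ?_) ?_) ?_) ?_
  · exact mul_mem (h1 i) (ih _ (by simp) (by simp))
  · exact mul_mem (h1 j) (ih _ (by simp) (by simp))
  · exact mul_mem (h1 k) (ih _ (by simp) (by simp))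
  · exact mul_mem hp_mem (traceWord_triple_mem a i j k)
  · exact mul_mem (sub_mem (h2 i j) (mul_mem (h1 i) (h1 j))) (ih _ (by simp) (by simp))
  · exact mul_mem (sub_mem (h2 i k) (mul_mem (h1 i) (h1 k))) (ih _ (by simp) (by simp))
  · exact mul_mem (sub_mem (ih _ (by simp) (by simp)) (mul_mem (h1 i) hp_mem)) (h2 j k)

theorem traceWord_mem_adjoin : ∀ u : List ι, u ≠ [] → traceWord a u ∈ S
  | [], h => absurd rfl h
  | [i], _ => traceWord_singleton_mem a i
  | [i, j], _ => traceWord_pair_mem a i j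
  | [i, j, k], _ => traceWord_triple_mem a i j k
  | _ :: _ :: _ :: l :: p, _ =>
    traceWord_cons_cons_cons_mem a (List.cons_ne_nil l p) fun v hv _ => traceWord_mem_adjoin v hv
termination_by u => u.length
decreasing_by simp only [List.length_cons] at *; omega

variable (K) in
theorem adjoin_trace_words_eq_adjoin_traceGenerators :
    Algebra.adjoin K {x | ∃ (l : ℕ) (w : Fin (l + 1) → ι),
      x = trace (List.ofFn fun j => a (w j)).prod} = S := by
  apply le_antisymm <;> refine Algebra.adjoin_le ?_
  · rintro _ ⟨l, w, rfl⟩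
    have := traceWord_mem_adjoin (K := K) a (List.ofFn w) (by simp)
    rwa [traceWord, List.map_ofFn] at this
  · rintro _ ((⟨i, rfl⟩ | ⟨i, j, -, rfl⟩) | ⟨i, j, k, -, -, rfl⟩)
    · exact Algebra.subset_adjoin ⟨0, ![i], by simp⟩
    · exact Algebra.subset_adjoin ⟨1, ![i, j], by simp [List.ofFn_succ]⟩
    · exact Algebra.subset_adjoin ⟨2, ![i, j, k], by simp [List.ofFn_succ, mul_assoc]⟩

end TwoByTwoTraces

open TwoByTwoTraces in
theorem stmt9_general (K : Type) [Field K] [CharZero K] (m : ℕ) :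
    Ckm K 2 m = Algebra.adjoin K
      ({x | ∃ i, x = scalarOf K 2 m (Matrix.trace (genY K 2 m i))} ∪
       {x | ∃ i j, i ≤ j ∧
          x = scalarOf K 2 m (Matrix.trace (genY K 2 m i * genY K 2 m j))} ∪
       {x | ∃ i₁ i₂ i₃, i₁ < i₂ ∧ i₂ < i₃ ∧
          x = scalarOf K 2 m
            (Matrix.trace (genY K 2 m i₁ * genY K 2 m i₂ * genY K 2 m i₃))}) := by
  have : Invertible (2 : K) := invertibleOfNonzero two_ne_zero
  have key := congrArg
    (Subalgebra.map (IsScalarTower.toAlgHom K (MvPolynomial (Fin m × Fin 2 × Fin 2) K) (Mat K 2 m)))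
    (adjoin_trace_words_eq_adjoin_traceGenerators K (genY K 2 m))
  rw [← Algebra.adjoin_image, ← Algebra.adjoin_image] at key
  rw [Ckm]
  convert key using 2 <;> ext x
  · simp [scalarOf, Set.image, eq_comm]
  · simp only [traceGenerators, Set.image_union]
    simp [scalarOf, Set.image, eq_comm, and_assoc]

/-- **Sibirskii.** For `k = 2`, `m ≥ 2`, the pure trace algebra `C_2m` is
generated as a unital `K`-algebra by the scalar matrices `tr(y_i)·I`, `tr(y_i y_j)·I` for
`i ≤ j`, and `tr(y_{i_1} y_{i_2} y_{i_3})·I` for `i_1 < i_2 < i_3`. -/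
theorem stmt9 (K : Type) [Field K] [CharZero K] (m : ℕ) (hm : 2 ≤ m) :
    Ckm K 2 m = Algebra.adjoin K
      ({x | ∃ i, x = scalarOf K 2 m (Matrix.trace (genY K 2 m i))} ∪
       {x | ∃ i j, i ≤ j ∧
          x = scalarOf K 2 m (Matrix.trace (genY K 2 m i * genY K 2 m j))} ∪
       {x | ∃ i₁ i₂ i₃, i₁ < i₂ ∧ i₂ < i₃ ∧
          x = scalarOf K 2 m
            (Matrix.trace (genY K 2 m i₁ * genY K 2 m i₂ * genY K 2 m i₃))}) :=
  stmt9_general K m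
end
end

section
/- Let k = 2 and m ≥ 2. Then T_2m^{(0)} = W_2m; that is, every scalar matrix tr(z_{i_1}⋯z_{i_l})·I with l ≥ 1 belongs to the K-subalgebra W_2m generated by z_1,…,z_m. Moreover, C_2m^{(0)} is generated as a unital K-algebra by the scalar matrices tr(z_i z_j)·I for 1 ≤ i ≤ j ≤ m and tr(z_{i_1} z_{i_2} z_{i_3})·I for 1 ≤ i_1 < i_2 < i_3 ≤ m, all of which belong to W_2m. -/
open scoped BigOperators
noncomputable section

/-!
For traceless `2 × 2` matrices over a commutative ring, `ab + ba = tr(ab)·1` and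
`abc - cba = tr(abc)·1`; together they give `2abc = tr(abc)·1 + tr(bc)a - tr(ac)b + tr(ab)c`.
Multiplying by a word and taking traces expresses the trace of a word of length at least four
through traces of shorter words, so, `2` being invertible, all traces of words in the `z_i` lie
in the algebra generated by the traces of length two and three. The cubic traces are
alternating in their indices, so increasing triples suffice, and the same two identities exhibit
`tr(z_i z_j)·1` and `tr(z_i z_j z_k)·1` as elements of `W_2m`.
-/

namespace Matrix

variable {R : Type*} [CommRing R] {a b c : Matrix (Fin 2) (Fin 2) R}

theorem apply_one_one_eq_neg_of_trace_eq_zero (ha : a.trace = 0) : a 1 1 = -a 0 0 := by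
  rw [trace_fin_two] at ha
  linear_combination ha

theorem mul_self_eq_neg_det_smul_one_of_trace_eq_zero (ha : a.trace = 0) :
    a * a = (-a.det) • (1 : Matrix (Fin 2) (Fin 2) R) := by
  have ha' := apply_one_one_eq_neg_of_trace_eq_zero ha
  ext i j
  fin_cases i <;> fin_cases j <;> simp [mul_apply, det_fin_two, ha'] <;> ring

theorem mul_add_mul_eq_trace_smul_one_of_trace_eq_zero (ha : a.trace = 0) (hb : b.trace = 0) :
    a * b + b * a = (a * b).trace • (1 : Matrix (Fin 2) (Fin 2) R) := by
  have ha' := apply_one_one_eq_neg_of_trace_eq_zero ha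
  have hb' := apply_one_one_eq_neg_of_trace_eq_zero hb
  ext i j
  fin_cases i <;> fin_cases j <;> simp [mul_apply, trace_fin_two, ha', hb'] <;> ring

theorem mul_mul_sub_mul_mul_eq_trace_smul_one_of_trace_eq_zero (ha : a.trace = 0)
    (hb : b.trace = 0) (hc : c.trace = 0) :
    a * b * c - c * b * a = (a * b * c).trace • (1 : Matrix (Fin 2) (Fin 2) R) := by
  have ha' := apply_one_one_eq_neg_of_trace_eq_zero ha
  have hb' := apply_one_one_eq_neg_of_trace_eq_zero hb
  have hc' := apply_one_one_eq_neg_of_trace_eq_zero hc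
  ext i j
  fin_cases i <;> fin_cases j <;> simp [mul_apply, trace_fin_two, ha', hb', hc'] <;> ring

theorem mul_mul_add_mul_mul_eq_of_trace_eq_zero (ha : a.trace = 0) (hb : b.trace = 0)
    (hc : c.trace = 0) :
    a * b * c + c * b * a = (b * c).trace • a - (a * c).trace • b + (a * b).trace • c := by
  have hbc := mul_add_mul_eq_trace_smul_one_of_trace_eq_zero hb hc
  have hac := mul_add_mul_eq_trace_smul_one_of_trace_eq_zero ha hc
  have hab := mul_add_mul_eq_trace_smul_one_of_trace_eq_zero ha hb
  calc a * b * c + c * b * a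
      = a * (b * c + c * b) - (a * c + c * a) * b + c * (a * b + b * a) := by noncomm_ring
    _ = _ := by rw [hbc, hac, hab, mul_smul_one, smul_one_mul, mul_smul_one]

theorem two_smul_mul_mul_of_trace_eq_zero (ha : a.trace = 0) (hb : b.trace = 0)
    (hc : c.trace = 0) :
    (2 : R) • (a * b * c) = (a * b * c).trace • (1 : Matrix (Fin 2) (Fin 2) R)
      + (b * c).trace • a - (a * c).trace • b + (a * b).trace • c := by
  rw [← mul_mul_sub_mul_mul_eq_trace_smul_one_of_trace_eq_zero ha hb hc, add_sub_assoc, add_assoc,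
    ← mul_mul_add_mul_mul_eq_of_trace_eq_zero ha hb hc, two_smul]
  abel

theorem trace_mul_mul_swap_of_trace_eq_zero (ha : a.trace = 0) (hb : b.trace = 0)
    (hc : c.trace = 0) : (a * c * b).trace = -(a * b * c).trace := by
  have h := congrArg trace (mul_mul_sub_mul_mul_eq_trace_smul_one_of_trace_eq_zero ha hb hc)
  rw [trace_sub, trace_mul_cycle c b a, trace_smul, trace_one, Fintype.card_fin] at h
  simp only [smul_eq_mul, Nat.cast_ofNat] at h
  linear_combination -h

theorem trace_mul_self_mul_of_trace_eq_zero (ha : a.trace = 0) (hb : b.trace = 0) :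
    (a * a * b).trace = 0 := by
  rw [mul_self_eq_neg_det_smul_one_of_trace_eq_zero ha, smul_one_mul, trace_smul, hb, smul_zero]

theorem two_mul_trace_mul_mul_mul_of_trace_eq_zero (ha : a.trace = 0) (hb : b.trace = 0)
    (hc : c.trace = 0) (d : Matrix (Fin 2) (Fin 2) R) :
    2 * (a * b * c * d).trace = (a * b * c).trace * d.trace + (b * c).trace * (a * d).trace
      - (a * c).trace * (b * d).trace + (a * b).trace * (c * d).trace := by
  have h := congrArg (fun x => (x * d).trace) (two_smul_mul_mul_of_trace_eq_zero ha hb hc)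
  simpa only [smul_mul_assoc, add_mul, sub_mul, one_mul, trace_add, trace_sub, trace_smul,
    smul_eq_mul] using h

end Matrix

section TracelessFamily

open Matrix

variable {A ι : Type*} [CommRing A] {z : ι → Matrix (Fin 2) (Fin 2) A}

theorem trace_mul_mul_mem_of_forall_lt {S : Type*} [SetLike S A] [AddSubgroupClass S A] {s : S}
    [LinearOrder ι] (hz : ∀ i, (z i).trace = 0)
    (hs : ∀ i j k, i < j → j < k → (z i * z j * z k).trace ∈ s) (i j k : ι) :
    (z i * z j * z k).trace ∈ s := by
  have swap {i j k : ι} : (z i * z k * z j).trace ∈ s ↔ (z i * z j * z k).trace ∈ s := by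
    rw [trace_mul_mul_swap_of_trace_eq_zero (hz i) (hz j) (hz k), neg_mem_iff]
  have cycle {i j k : ι} : (z k * z i * z j).trace ∈ s ↔ (z i * z j * z k).trace ∈ s := by
    rw [trace_mul_cycle (z i)]
  wlog hij : i ≤ j generalizing i j k
  · rw [← swap, ← cycle]
    exact this j i k (le_of_not_ge hij)
  wlog hik : i ≤ k generalizing i j k
  · rw [← cycle]
    exact this k i j (le_of_not_ge hik) (le_trans (le_of_not_ge hik) hij)
  wlog hjk : j ≤ k generalizing j k
  · rw [← swap]
    exact this k j hik hij (le_of_not_ge hjk)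
  rcases hij.lt_or_eq with hij | rfl
  · rcases hjk.lt_or_eq with hjk | rfl
    · exact hs i j k hij hjk
    · rw [← trace_mul_cycle, trace_mul_self_mul_of_trace_eq_zero (hz j) (hz i)]
      exact zero_mem s
  · rw [trace_mul_self_mul_of_trace_eq_zero (hz i) (hz k)]
    exact zero_mem s

variable {K : Type*} [Field K] [Algebra K A] {S : Subalgebra K A}

theorem trace_mul_list_prod_mem (h2 : (2 : K) ≠ 0) (hz : ∀ i, (z i).trace = 0)
    (h₂ : ∀ i j, (z i * z j).trace ∈ S) (h₃ : ∀ i j k, (z i * z j * z k).trace ∈ S) :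
    ∀ (i : ι) (L : List ι), (z i * (L.map z).prod).trace ∈ S
  | i, [] => by simp [hz i]
  | i, [j] => by simpa only [List.map_cons, List.map_nil, List.prod_singleton] using h₂ i j
  | i, [j, k] => by simpa [mul_assoc] using h₃ i j k
  | i, j :: k :: l :: L => by
    set d := ((l :: L).map z).prod
    have hd : d.trace ∈ S := trace_mul_list_prod_mem h2 hz h₂ h₃ l L
    have hd' (p : ι) : (z p * d).trace ∈ S := trace_mul_list_prod_mem h2 hz h₂ h₃ p (l :: L)
    have key := two_mul_trace_mul_mul_mul_of_trace_eq_zero (hz i) (hz j) (hz k) d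
    have h2x : (2 : K) • (z i * z j * z k * d).trace ∈ S := by
      rw [two_smul, ← two_mul, key]
      exact add_mem (sub_mem (add_mem (mul_mem (h₃ i j k) hd) (mul_mem (h₂ j k) (hd' i)))
        (mul_mem (h₂ i k) (hd' j))) (mul_mem (h₂ i j) (hd' k))
    have hw : z i * ((j :: k :: l :: L).map z).prod = z i * z j * z k * d := by
      simp only [d, List.map_cons, List.prod_cons, mul_assoc]
    rw [hw, ← inv_smul_smul₀ h2 (z i * z j * z k * d).trace]
    exact S.smul_mem h2x _

end TracelessFamily

theorem trace_genZ (K : Type) [Field K] {k : ℕ} (hk : (k : K) ≠ 0) (m : ℕ) (i : Fin m) :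
    (genZ K k m i).trace = 0 := by
  rw [genZ, scalarOf, Algebra.algebraMap_eq_smul_one, Matrix.trace_sub, Matrix.trace_smul,
    Matrix.trace_smul, Matrix.trace_one, Fintype.card_fin, smul_eq_mul, mul_comm, ← nsmul_eq_mul,
    ← Nat.cast_smul_eq_nsmul K, smul_smul, inv_mul_cancel₀ hk, one_smul, sub_self]

def orderedTraceGens (K : Type) [Field K] (m : ℕ) : Set (Mat K 2 m) :=
  {x | ∃ i j, i ≤ j ∧
      x = scalarOf K 2 m (Matrix.trace (genZ K 2 m i * genZ K 2 m j))} ∪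
  {x | ∃ i₁ i₂ i₃, i₁ < i₂ ∧ i₂ < i₃ ∧
      x = scalarOf K 2 m (Matrix.trace (genZ K 2 m i₁ * genZ K 2 m i₂ * genZ K 2 m i₃))}

section TwoByTwo

variable (K : Type) [Field K] [NeZero (2 : K)] (m : ℕ)

theorem orderedTraceGens_subset_Wkm : orderedTraceGens K m ⊆ Wkm K 2 m := by
  have hz (i : Fin m) : genZ K 2 m i ∈ Wkm K 2 m := Algebra.subset_adjoin ⟨i, rfl⟩
  have htr (i : Fin m) := trace_genZ K two_ne_zero m i
  rintro x (⟨i, j, -, rfl⟩ | ⟨i, j, k, -, -, rfl⟩) <;> rw [scalarOf, Algebra.algebraMap_eq_smul_one]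
  · rw [← Matrix.mul_add_mul_eq_trace_smul_one_of_trace_eq_zero (htr i) (htr j)]
    exact add_mem (mul_mem (hz i) (hz j)) (mul_mem (hz j) (hz i))
  · rw [← Matrix.mul_mul_sub_mul_mul_eq_trace_smul_one_of_trace_eq_zero (htr i) (htr j) (htr k)]
    exact sub_mem (mul_mem (mul_mem (hz i) (hz j)) (hz k))
      (mul_mem (mul_mem (hz k) (hz j)) (hz i))

theorem scalarOf_trace_prod_genZ_mem_adjoin (l : ℕ) (w : Fin (l + 1) → Fin m) :
    scalarOf K 2 m (Matrix.trace ((List.ofFn fun j => genZ K 2 m (w j)).prod))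
      ∈ Algebra.adjoin K (orderedTraceGens K m) := by
  let S := (Algebra.adjoin K (orderedTraceGens K m)).comap
    ((Algebra.ofId (MvPolynomial (Fin m × Fin 2 × Fin 2) K) (Mat K 2 m)).restrictScalars K)
  have htr (i : Fin m) := trace_genZ K two_ne_zero m i
  have h₂ (i j : Fin m) : (genZ K 2 m i * genZ K 2 m j).trace ∈ S := by
    rcases le_total i j with hij | hji
    · exact Algebra.subset_adjoin (Or.inl ⟨i, j, hij, rfl⟩)
    · rw [Matrix.trace_mul_comm]
      exact Algebra.subset_adjoin (Or.inl ⟨j, i, hji, rfl⟩)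
  have h₃ := trace_mul_mul_mem_of_forall_lt (s := S) htr
    fun i j k hij hjk => Algebra.subset_adjoin (Or.inr ⟨i, j, k, hij, hjk, rfl⟩)
  have := trace_mul_list_prod_mem two_ne_zero htr h₂ h₃ (w 0) (List.ofFn fun j => w j.succ)
  rw [List.map_ofFn] at this
  rw [List.ofFn_succ, List.prod_cons]
  exact this

theorem Ckm0_eq_adjoin_orderedTraceGens :
    Ckm0 K 2 m = Algebra.adjoin K (orderedTraceGens K m) := by
  refine le_antisymm (Algebra.adjoin_le ?_) (Algebra.adjoin_le ?_)
  · rintro x ⟨l, w, rfl⟩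
    exact scalarOf_trace_prod_genZ_mem_adjoin K m l w
  · rintro x (⟨i, j, -, rfl⟩ | ⟨i, j, k, -, -, rfl⟩)
    · exact Algebra.subset_adjoin ⟨1, ![i, j], by simp [List.ofFn_succ]⟩
    · exact Algebra.subset_adjoin ⟨2, ![i, j, k], by simp [List.ofFn_succ, mul_assoc]⟩

end TwoByTwo

theorem stmt10_general (K : Type) [Field K] [CharZero K] (m : ℕ) :
    Tkm0 K 2 m = Wkm K 2 m ∧
    (∀ (l : ℕ) (w : Fin (l + 1) → Fin m),
      scalarOf K 2 m (Matrix.trace ((List.ofFn fun j => genZ K 2 m (w j)).prod))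
        ∈ Wkm K 2 m) ∧
    Ckm0 K 2 m = Algebra.adjoin K
      ({x | ∃ i j, i ≤ j ∧
          x = scalarOf K 2 m (Matrix.trace (genZ K 2 m i * genZ K 2 m j))} ∪
       {x | ∃ i₁ i₂ i₃, i₁ < i₂ ∧ i₂ < i₃ ∧
          x = scalarOf K 2 m
            (Matrix.trace (genZ K 2 m i₁ * genZ K 2 m i₂ * genZ K 2 m i₃))}) ∧
    (({x | ∃ i j, i ≤ j ∧
          x = scalarOf K 2 m (Matrix.trace (genZ K 2 m i * genZ K 2 m j))} ∪
       {x | ∃ i₁ i₂ i₃, i₁ < i₂ ∧ i₂ < i₃ ∧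
          x = scalarOf K 2 m
            (Matrix.trace (genZ K 2 m i₁ * genZ K 2 m i₂ * genZ K 2 m i₃))})
      ⊆ (Wkm K 2 m : Set (Mat K 2 m))) := by
  have hGW : Algebra.adjoin K (orderedTraceGens K m) ≤ Wkm K 2 m :=
    Algebra.adjoin_le (orderedTraceGens_subset_Wkm K m)
  have hC := Ckm0_eq_adjoin_orderedTraceGens K m
  exact ⟨sup_eq_left.mpr (hC ▸ hGW),
    fun l w => hGW (scalarOf_trace_prod_genZ_mem_adjoin K m l w), hC,
    orderedTraceGens_subset_Wkm K m⟩

/-- **Procesi.** For `k = 2`, `m ≥ 2`: `T_2m⁰ = W_2m`, i.e. every scalar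
matrix `tr(z_{i_1} ⋯ z_{i_l})·I` belongs to `W_2m`; moreover `C_2m⁰` is generated as a
unital `K`-algebra by the `tr(z_i z_j)·I` (`i ≤ j`) and `tr(z_{i_1} z_{i_2} z_{i_3})·I`
(`i_1 < i_2 < i_3`), all of which belong to `W_2m`. -/
theorem stmt10 (K : Type) [Field K] [CharZero K] (m : ℕ) (hm : 2 ≤ m) :
    Tkm0 K 2 m = Wkm K 2 m ∧
    (∀ (l : ℕ) (w : Fin (l + 1) → Fin m),
      scalarOf K 2 m (Matrix.trace ((List.ofFn fun j => genZ K 2 m (w j)).prod))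
        ∈ Wkm K 2 m) ∧
    Ckm0 K 2 m = Algebra.adjoin K
      ({x | ∃ i j, i ≤ j ∧
          x = scalarOf K 2 m (Matrix.trace (genZ K 2 m i * genZ K 2 m j))} ∪
       {x | ∃ i₁ i₂ i₃, i₁ < i₂ ∧ i₂ < i₃ ∧
          x = scalarOf K 2 m
            (Matrix.trace (genZ K 2 m i₁ * genZ K 2 m i₂ * genZ K 2 m i₃))}) ∧
    (({x | ∃ i j, i ≤ j ∧
          x = scalarOf K 2 m (Matrix.trace (genZ K 2 m i * genZ K 2 m j))} ∪
       {x | ∃ i₁ i₂ i₃, i₁ < i₂ ∧ i₂ < i₃ ∧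
          x = scalarOf K 2 m
            (Matrix.trace (genZ K 2 m i₁ * genZ K 2 m i₂ * genZ K 2 m i₃))})
      ⊆ (Wkm K 2 m : Set (Mat K 2 m))) :=
  stmt10_general K m
end
end

section
/- Let R be a commutative ring and let a, b, c ∈ M_2(R) be 2×2 matrices with tr(a) = tr(b) = tr(c) = 0. Then 4·[a,b]·c² = [[[a,b],c],c] − [[a,c],[b,c]], where [x,y] = xy − yx. -/
/-- For traceless `2 × 2` matrices `a, b, c` over a commutative ring `R`:
`4·[a,b]·c² = [[[a,b],c],c] − [[a,c],[b,c]]`, where `[x,y] = xy − yx`. -/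
theorem stmt14 (R : Type) [CommRing R] (a b c : Matrix (Fin 2) (Fin 2) R)
    (ha : Matrix.trace a = 0) (hb : Matrix.trace b = 0) (hc : Matrix.trace c = 0) :
    4 • (⁅a, b⁆ * (c * c)) = ⁅⁅⁅a, b⁆, c⁆, c⁆ - ⁅⁅a, c⁆, ⁅b, c⁆⁆ := by
  simp [Matrix.trace_fin_two] at ha hb hc
  have ha' : a 1 1 = -a 0 0 := by linear_combination ha
  have hb' : b 1 1 = -b 0 0 := by linear_combination hb
  have hc' : c 1 1 = -c 0 0 := by linear_combination hc
  ext i j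
  fin_cases i <;> fin_cases j <;>
    simp [Ring.lie_def, Matrix.mul_apply, Fin.sum_univ_two, ha', hb', hc'] <;> ring
end

section
/- Let R be a commutative ring and let a, b, c, d ∈ M_2(R) be 2×2 matrices with tr(a) = tr(b) = tr(c) = tr(d) = 0. Then 4·[a,b]·(cd + dc) = [[[a,b],c],d] + [[[a,b],d],c] − [[a,c],[b,d]] − [[a,d],[b,c]], where [x,y] = xy − yx. -/
/-- For traceless `2 × 2` matrices `a, b, c, d` over a commutative ring
`R`: `4·[a,b]·(cd + dc) = [[[a,b],c],d] + [[[a,b],d],c] − [[a,c],[b,d]] − [[a,d],[b,c]]`,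
where `[x,y] = xy − yx`. -/
theorem stmt15 (R : Type) [CommRing R] (a b c d : Matrix (Fin 2) (Fin 2) R)
    (ha : Matrix.trace a = 0) (hb : Matrix.trace b = 0) (hc : Matrix.trace c = 0)
    (hd : Matrix.trace d = 0) :
    4 • (⁅a, b⁆ * (c * d + d * c))
      = ⁅⁅⁅a, b⁆, c⁆, d⁆ + ⁅⁅⁅a, b⁆, d⁆, c⁆ - ⁅⁅a, c⁆, ⁅b, d⁆⁆ - ⁅⁅a, d⁆, ⁅b, c⁆⁆ := by
  simp only [Matrix.trace_fin_two] at ha hb hc hd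
  have ha' : a 1 1 = -a 0 0 := by linear_combination ha
  have hb' : b 1 1 = -b 0 0 := by linear_combination hb
  have hc' : c 1 1 = -c 0 0 := by linear_combination hc
  have hd' : d 1 1 = -d 0 0 := by linear_combination hd
  ext i j
  fin_cases i <;> fin_cases j <;>
    simp only [Matrix.smul_apply, Ring.lie_def, Matrix.add_apply, Matrix.sub_apply,
      Matrix.mul_apply, Fin.sum_univ_two, Fin.mk_zero, Fin.mk_one, Fin.isValue,
      nsmul_eq_mul, Nat.cast_ofNat, ha', hb', hc', hd'] <;> ring
end

section
/- Let R be a commutative ring and let a, b, c, d ∈ M_2(R) be 2×2 matrices with tr(a) = tr(b) = tr(c) = tr(d) = 0. Then 8·d·s_3(a,b,c) = 3·∑_{σ∈S_3} sign(σ)·[[[d, w_{σ(1)}], w_{σ(2)}], w_{σ(3)}], where (w_1,w_2,w_3) = (a,b,c), s_3(a,b,c) = ∑_{σ∈S_3} sign(σ)·w_{σ(1)}w_{σ(2)}w_{σ(3)} is the standard polynomial of degree 3, and [x,y] = xy − yx. -/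
open scoped BigOperators
noncomputable section

/-- The standard polynomial of degree 3,
`s₃(a,b,c) = ∑_{σ ∈ S₃} sign(σ) · w_{σ(1)} w_{σ(2)} w_{σ(3)}` with `(w₁,w₂,w₃) = (a,b,c)`. -/
def stdS3 {R : Type} [Ring R] (a b c : R) : R :=
  ∑ σ : Equiv.Perm (Fin 3),
    (Equiv.Perm.sign σ : ℤ) • (![a, b, c] (σ 0) * ![a, b, c] (σ 1) * ![a, b, c] (σ 2))

/-- An explicit enumeration of `Equiv.Perm (Fin 3)`. -/
def permFin3Enum : Fin 6 → Equiv.Perm (Fin 3) :=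
  ![1, Equiv.swap 0 1, Equiv.swap 0 2, Equiv.swap 1 2,
    Equiv.swap 0 1 * Equiv.swap 1 2, Equiv.swap 0 2 * Equiv.swap 1 2]

lemma sum_perm3 {M : Type*} [AddCommMonoid M] (f : Equiv.Perm (Fin 3) → M) :
    ∑ σ, f σ = ∑ i : Fin 6, f (permFin3Enum i) :=
  (Fintype.sum_bijective permFin3Enum (by decide) _ _ fun _ => rfl).symm

lemma perm3_expand {M : Type*} [AddCommGroup M] (f : Fin 3 → Fin 3 → Fin 3 → M) :
    (∑ σ : Equiv.Perm (Fin 3), (Equiv.Perm.sign σ : ℤ) • f (σ 0) (σ 1) (σ 2))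
      = f 0 1 2 - f 1 0 2 - f 2 1 0 - f 0 2 1 + f 1 2 0 + f 2 0 1 := by
  rw [sum_perm3]
  simp only [Fin.sum_univ_six]
  rw [show ((Equiv.Perm.sign (permFin3Enum 0) : ℤ)) = 1 from by decide,
    show ((Equiv.Perm.sign (permFin3Enum 1) : ℤ)) = -1 from by decide,
    show ((Equiv.Perm.sign (permFin3Enum 2) : ℤ)) = -1 from by decide,
    show ((Equiv.Perm.sign (permFin3Enum 3) : ℤ)) = -1 from by decide,
    show ((Equiv.Perm.sign (permFin3Enum 4) : ℤ)) = 1 from by decide,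
    show ((Equiv.Perm.sign (permFin3Enum 5) : ℤ)) = 1 from by decide,
    show permFin3Enum 0 0 = 0 from by decide, show permFin3Enum 0 1 = 1 from by decide,
    show permFin3Enum 0 2 = 2 from by decide,
    show permFin3Enum 1 0 = 1 from by decide, show permFin3Enum 1 1 = 0 from by decide,
    show permFin3Enum 1 2 = 2 from by decide,
    show permFin3Enum 2 0 = 2 from by decide, show permFin3Enum 2 1 = 1 from by decide,
    show permFin3Enum 2 2 = 0 from by decide,
    show permFin3Enum 3 0 = 0 from by decide, show permFin3Enum 3 1 = 2 from by decide,
    show permFin3Enum 3 2 = 1 from by decide,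
    show permFin3Enum 4 0 = 1 from by decide, show permFin3Enum 4 1 = 2 from by decide,
    show permFin3Enum 4 2 = 0 from by decide,
    show permFin3Enum 5 0 = 2 from by decide, show permFin3Enum 5 1 = 0 from by decide,
    show permFin3Enum 5 2 = 1 from by decide]
  simp only [one_smul, neg_smul]
  abel

set_option maxHeartbeats 2000000 in
/-- For traceless `2 × 2` matrices `a, b, c, d` over a commutative ring
`R`: `8·d·s₃(a,b,c) = 3·∑_{σ ∈ S₃} sign(σ)·[[[d, w_{σ(1)}], w_{σ(2)}], w_{σ(3)}]`, with
`(w₁,w₂,w₃) = (a,b,c)` and `[x,y] = xy − yx`. -/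
theorem stmt16 (R : Type) [CommRing R] (a b c d : Matrix (Fin 2) (Fin 2) R)
    (ha : Matrix.trace a = 0) (hb : Matrix.trace b = 0) (hc : Matrix.trace c = 0)
    (hd : Matrix.trace d = 0) :
    8 • (d * stdS3 a b c)
      = 3 • ∑ σ : Equiv.Perm (Fin 3),
          (Equiv.Perm.sign σ : ℤ) •
            ⁅⁅⁅d, ![a, b, c] (σ 0)⁆, ![a, b, c] (σ 1)⁆, ![a, b, c] (σ 2)⁆ := by
  rw [Matrix.trace_fin_two] at ha hb hc hd
  have ha' : a 1 1 = -a 0 0 := by linear_combination ha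
  have hb' : b 1 1 = -b 0 0 := by linear_combination hb
  have hc' : c 1 1 = -c 0 0 := by linear_combination hc
  have hd' : d 1 1 = -d 0 0 := by linear_combination hd
  rw [stdS3, perm3_expand (fun i j k => ![a,b,c] i * ![a,b,c] j * ![a,b,c] k),
    perm3_expand (fun i j k => ⁅⁅⁅d, ![a,b,c] i⁆, ![a,b,c] j⁆, ![a,b,c] k⁆)]
  simp only [Matrix.cons_val_zero, Matrix.cons_val_one, Matrix.head_cons,
    Matrix.cons_val_two, Matrix.tail_cons, Ring.lie_def]
  rw [← Matrix.ext_iff]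
  simp only [Fin.forall_fin_two, Matrix.smul_apply, Matrix.mul_apply, Matrix.sub_apply,
    Matrix.add_apply, Fin.sum_univ_two, smul_eq_mul, nsmul_eq_mul, ha', hb', hc', hd']
  refine ⟨⟨by ring, by ring⟩, by ring, by ring⟩
end
end

section
/- Let R be a commutative ring and let a, b, c ∈ M_2(R) be 2×2 matrices with tr(a) = tr(b) = tr(c) = 0. Then [[a,b],c] = 2·(a·(bc + cb) − b·(ac + ca)), where [x,y] = xy − yx. -/
/-- For traceless `2 × 2` matrices `a, b, c` over a commutative ring `R`:
`[[a,b],c] = 2·(a·(bc + cb) − b·(ac + ca))`, where `[x,y] = xy − yx`. -/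
theorem stmt17 (R : Type) [CommRing R] (a b c : Matrix (Fin 2) (Fin 2) R)
    (ha : Matrix.trace a = 0) (hb : Matrix.trace b = 0) (hc : Matrix.trace c = 0) :
    ⁅⁅a, b⁆, c⁆ = 2 • (a * (b * c + c * b) - b * (a * c + c * a)) := by
  simp only [Matrix.trace_fin_two] at ha hb hc
  have ha' : a 1 1 = -a 0 0 := by linear_combination ha
  have hb' : b 1 1 = -b 0 0 := by linear_combination hb
  have hc' : c 1 1 = -c 0 0 := by linear_combination hc
  ext i j
  fin_cases i <;> fin_cases j <;>
    simp only [Ring.lie_def, Matrix.sub_apply, Matrix.add_apply, Matrix.smul_apply,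
      Matrix.mul_apply, Fin.sum_univ_two, smul_eq_mul, Fin.mk_zero, Fin.mk_one,
      ha', hb', hc'] <;>
    ring
end
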